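/- arXiv:1011.3232 — 3 statements merged into one kernel-verified Lean document; each statement's English description precedes it below -/
import Mathlib

section
/- Let v : 2^M → ℝ be a subadditive, monotone, normalized valuation on a finite ground set M, and let c ∈ (0,1] be such that 1/c is a positive integer k. Define the c-proxy valuation v'(S) = E[v(T)] where T ⊆ S includes each element of S independently with probability c. Then for every S ⊆ M, v'(S) ≥ c·v(S). -/
/-!
Colour every element uniformly and independently with one of `k` colours. Each colour class
inside `S` is then a random subset of `S` containing every element with probability `c = 1/k`,
and the `k` classes cover `S`, so subadditivity gives `v S ≤ ∑ᵢ v (class i)`; taking expectations,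
`v S ≤ k * v' S`. The expectation over colourings is an average over all `f : α → κ`, computed
by counting the colourings with a prescribed colour class.
-/
open Finset

/-- The `c`-proxy valuation: `v' S = E[v T]` where `T ⊆ S` includes each
element of `S` independently with probability `c`. -/
noncomputable def proxy {α : Type*} (v : Finset α → ℝ) (c : ℝ) (S : Finset α) : ℝ :=
  ∑ T ∈ S.powerset, c ^ T.card * (1 - c) ^ (S.card - T.card) * v T

section Colorings

variable {α κ : Type*} [Fintype α] [DecidableEq α] [Fintype κ] [DecidableEq κ]

lemma filter_colorClass_eq_piFinset {S T : Finset α} (hT : T ⊆ S) (i : κ) :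
    ({f : α → κ | {x ∈ S | f x = i} = T} : Finset (α → κ)) =
      Fintype.piFinset fun x => if x ∈ S then (if x ∈ T then {i} else {i}ᶜ) else univ := by
  ext f
  simp only [mem_filter, mem_univ, true_and, Fintype.mem_piFinset, Finset.ext_iff]
  refine forall_congr' fun x => ?_
  by_cases hTx : x ∈ T
  · simp [hTx, hT hTx]
  · by_cases hS : x ∈ S <;> simp [hS, hTx]

lemma card_filter_colorClass_eq {S T : Finset α} (hT : T ⊆ S) (i : κ) :
    #{f : α → κ | {x ∈ S | f x = i} = T} =
      (Fintype.card κ - 1) ^ (#S - #T) * Fintype.card κ ^ (Fintype.card α - #S) := by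
  rw [filter_colorClass_eq_piFinset hT, Fintype.card_piFinset]
  simp [apply_ite Finset.card, prod_ite, card_compl, filter_notMem_eq_sdiff,
    card_sdiff_of_subset hT, ← compl_eq_univ_sdiff]

lemma sum_colorClass_eq {M : Type*} [AddCommMonoid M] (g : Finset α → M) (S : Finset α) (i : κ) :
    ∑ f : α → κ, g {x ∈ S | f x = i} = ∑ T ∈ S.powerset,
      ((Fintype.card κ - 1) ^ (#S - #T) * Fintype.card κ ^ (Fintype.card α - #S)) • g T := by
  rw [← sum_fiberwise_of_maps_to (g := fun f => {x ∈ S | f x = i}) (t := S.powerset)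
    fun f _ => mem_powerset.2 (filter_subset _ _)]
  refine sum_congr rfl fun T hT => ?_
  rw [sum_congr rfl fun f hf => congrArg g (mem_filter.1 hf).2, sum_const,
    card_filter_colorClass_eq (mem_powerset.1 hT)]

lemma sum_colorClass_eq_proxy (g : Finset α → ℝ) (S : Finset α) (i : κ) :
    ∑ f : α → κ, g {x ∈ S | f x = i} =
      Fintype.card κ ^ Fintype.card α * proxy g (Fintype.card κ)⁻¹ S := by
  have hκ : 1 ≤ Fintype.card κ := Fintype.card_pos_iff.2 ⟨i⟩
  have hK : (Fintype.card κ : ℝ) ≠ 0 := by positivity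
  rw [sum_colorClass_eq, proxy, mul_sum]
  refine sum_congr rfl fun T hT => ?_
  have hTS : #T ≤ #S := card_le_card (mem_powerset.1 hT)
  have hSα : #S ≤ Fintype.card α := card_le_univ S
  rw [nsmul_eq_mul, Nat.cast_mul, Nat.cast_pow, Nat.cast_pow, Nat.cast_sub hκ, Nat.cast_one]
  set K : ℝ := (Fintype.card κ : ℝ)
  have hsplit : K ^ Fintype.card α = K ^ (Fintype.card α - #S) * K ^ #T * K ^ (#S - #T) := by
    rw [← pow_add, ← pow_add]; congr 1; omega
  rw [hsplit]
  have hinv : K * K⁻¹ = 1 := mul_inv_cancel₀ hK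
  have hcompl : K * (1 - K⁻¹) = K - 1 := by rw [mul_sub, hinv, mul_one]
  calc ((K - 1) ^ (#S - #T) * K ^ (Fintype.card α - #S)) * g T
      = K ^ (Fintype.card α - #S) * (K * K⁻¹) ^ #T * (K * (1 - K⁻¹)) ^ (#S - #T) * g T := by
        rw [hinv, hcompl]; ring
    _ = _ := by rw [mul_pow, mul_pow]; ring

lemma le_card_mul_proxy_inv [Nonempty κ] {v : Finset α → ℝ} (hnorm : v ∅ = 0)
    (hsub : ∀ A B : Finset α, v (A ∪ B) ≤ v A + v B) (S : Finset α) :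
    v S ≤ Fintype.card κ * proxy v (Fintype.card κ)⁻¹ S := by
  have hcover (f : α → κ) : v S ≤ ∑ i, v {x ∈ S | f x = i} := by
    have hS : univ.sup (fun i => {x ∈ S | f x = i}) = S := by ext; simp
    calc v S = v (univ.sup fun i => {x ∈ S | f x = i}) := by rw [hS]
      _ ≤ _ := apply_sup_le_sum hnorm (hsub _ _) _
  set K := Fintype.card κ
  refine le_of_mul_le_mul_left ?_ (by positivity : (0 : ℝ) < K ^ Fintype.card α)
  calc (K : ℝ) ^ Fintype.card α * v S = ∑ _f : α → κ, v S := by simp [K]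
    _ ≤ ∑ f : α → κ, ∑ i, v {x ∈ S | f x = i} := sum_le_sum fun f _ => hcover f
    _ = ∑ _i : κ, K ^ Fintype.card α * proxy v (K : ℝ)⁻¹ S := by
        rw [sum_comm]; simp only [sum_colorClass_eq_proxy, K]
    _ = K ^ Fintype.card α * (K * proxy v (K : ℝ)⁻¹ S) := by
        rw [sum_const, card_univ, nsmul_eq_mul]; ring

end Colorings

theorem proxy_ge_scaled_general {α : Type*} [Fintype α] [DecidableEq α] (v : Finset α → ℝ)
    (hnorm : v ∅ = 0)
    (hsub : ∀ A B : Finset α, v (A ∪ B) ≤ v A + v B)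
    (c : ℝ)
    (k : ℕ) (hk : 0 < k) (hkc : (k : ℝ) = 1 / c) :
    ∀ S : Finset α, c * v S ≤ proxy v c S := by
  intro S
  have hc : c = (k : ℝ)⁻¹ := by rw [hkc, one_div, inv_inv]
  have : NeZero k := ⟨hk.ne'⟩
  have hbound := le_card_mul_proxy_inv (κ := Fin k) hnorm hsub S
  rw [Fintype.card_fin, ← hc] at hbound
  calc c * v S ≤ c * (k * proxy v c S) :=
        mul_le_mul_of_nonneg_left hbound (by rw [hc]; positivity)
    _ = proxy v c S := by rw [hc, ← mul_assoc, inv_mul_cancel₀ (by positivity), one_mul]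

theorem proxy_ge_scaled {α : Type*} [Fintype α] [DecidableEq α] (v : Finset α → ℝ)
    (hnorm : v ∅ = 0)
    (hmono : ∀ ⦃A B : Finset α⦄, A ⊆ B → v A ≤ v B)
    (hsub : ∀ A B : Finset α, v (A ∪ B) ≤ v A + v B)
    (c : ℝ) (hc0 : 0 < c) (hc1 : c ≤ 1)
    (k : ℕ) (hk : 0 < k) (hkc : (k : ℝ) = 1 / c) :
    ∀ S : Finset α, c * v S ≤ proxy v c S :=
  proxy_ge_scaled_general v hnorm hsub c k hk hkc
end

section
/- Let D be a (c,p)-fractional distribution arising from a feasible LP solution x: with probability p no bidder receives anything, and with probability 1−p each bidder i receives bundle S with probability x_{i,S} and then keeps each item of S independently with probability c. If all valuations v_i are subadditive, monotone, and normalized, 1/c ∈ ℕ, and x is an optimal LP solution (so Σ_{i,S} x_{i,S} v_i(S) ≥ OPT, the optimal integral welfare), then the expected welfare of D is at least (1−p)·c·OPT. -/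
open Finset

theorem proxy_zero {α : Type*} {v : Finset α → ℝ} (hnorm : v ∅ = 0) (S : Finset α) :
    proxy v 0 S = 0 := by
  refine sum_eq_zero fun T _ => ?_
  obtain rfl | hT := T.eq_empty_or_nonempty
  · simp [hnorm]
  · simp [zero_pow hT.card_pos.ne']

theorem le_sum_fiber_of_subadditive {ι β : Type*} [DecidableEq ι] [Fintype β] [DecidableEq β]
    {v : Finset ι → ℝ} (hnorm : v ∅ = 0) (hsub : ∀ A B, v (A ∪ B) ≤ v A + v B) (f : ι → β)
    (S : Finset ι) :
    v S ≤ ∑ j, v (S.filter (f · = j)) := by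
  calc v S = v (univ.sup fun j => S.filter (f · = j)) := by congr 1; ext; simp
    _ ≤ _ := apply_sup_le_sum hnorm (hsub _ _) univ

section Colorings

variable {ι : Type*} [Fintype ι] [DecidableEq ι] {k : ℕ}

theorem card_colorings_fiber_eq (j : Fin k) {S T : Finset ι} (hT : T ⊆ S) :
    #{f : ι → Fin k | S.filter (f · = j) = T} =
      (k - 1) ^ #(S \ T) * k ^ (Fintype.card ι - #S) := by
  have hfiber : ({f : ι → Fin k | S.filter (f · = j) = T} : Finset _) =
      Fintype.piFinset fun i => if i ∈ S then (if i ∈ T then {j} else {j}ᶜ) else univ := by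
    ext f
    simp only [mem_filter, mem_univ, true_and, Fintype.mem_piFinset, Finset.ext_iff]
    refine forall_congr' fun i => ?_
    split_ifs <;> simp [*]
    grind
  rw [hfiber, Fintype.card_piFinset]
  simp only [apply_ite card, card_singleton, card_compl, card_univ, Fintype.card_fin]
  rw [prod_ite, prod_ite]
  simp only [prod_const_one, one_mul, prod_const]
  rw [filter_mem_eq_of_subset (subset_univ S), ← sdiff_eq_filter, ← sdiff_eq_filter,
    card_univ_sdiff]

theorem sum_colorings_fiber_eq_proxy (g : Finset ι → ℝ) (j : Fin k) (S : Finset ι) :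
    ∑ f : ι → Fin k, g (S.filter (f · = j)) = k ^ Fintype.card ι * proxy g (1 / k) S := by
  have hk : (k : ℝ) ≠ 0 := by exact_mod_cast j.pos.ne'
  rw [← sum_fiberwise_of_maps_to (t := S.powerset) (g := fun f => S.filter (f · = j))
    fun f _ => mem_powerset.2 (filter_subset _ _), proxy, mul_sum]
  refine sum_congr rfl fun T hT => ?_
  have hTS := mem_powerset.1 hT
  rw [sum_congr rfl fun f hf => by rw [(mem_filter.1 hf).2], sum_const, nsmul_eq_mul,
    card_colorings_fiber_eq j hTS, card_sdiff_of_subset hTS]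
  obtain ⟨b, hb⟩ := Nat.exists_eq_add_of_le (card_le_card hTS)
  obtain ⟨c, hc⟩ := Nat.exists_eq_add_of_le (card_le_univ S)
  rw [hc, hb, Nat.add_sub_cancel_left, Nat.add_sub_cancel_left]
  push_cast [Nat.one_le_iff_ne_zero.2 j.pos.ne']
  rw [one_sub_div hk, div_pow, div_pow, one_pow, pow_add, pow_add]
  field_simp

theorem inv_natCast_mul_le_proxy {v : Finset ι → ℝ} (hnorm : v ∅ = 0)
    (hsub : ∀ A B, v (A ∪ B) ≤ v A + v B) (S : Finset ι) :
    (1 / k) * v S ≤ proxy v (1 / k) S := by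
  obtain rfl | hk := k.eq_zero_or_pos
  · simp [proxy_zero hnorm]
  have hsum := sum_le_sum (s := univ) fun (f : ι → Fin k) _ =>
    le_sum_fiber_of_subadditive hnorm hsub f S
  rw [sum_comm] at hsum
  simp only [sum_colorings_fiber_eq_proxy, sum_const, card_univ, Fintype.card_fun,
    Fintype.card_fin, nsmul_eq_mul] at hsum
  rw [one_div_mul_eq_div, div_le_iff₀ (by positivity)]
  refine le_of_mul_le_mul_left ?_ (by positivity : (0 : ℝ) < k ^ Fintype.card ι)
  push_cast at hsum
  linarith

end Colorings

/-- By linearity of expectation, the right-hand side is the expected welfare of the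
`(c,p)`-fractional distribution built from `x`. -/
theorem cp_fractional_welfare_general {ι : Type*} [Fintype ι] [DecidableEq ι] (n : ℕ)
    (v : Fin n → Finset ι → ℝ)
    (hnorm : ∀ i, v i ∅ = 0)
    (hsub : ∀ i, ∀ A B : Finset ι, v i (A ∪ B) ≤ v i A + v i B)
    (x : Fin n → Finset ι → ℝ)
    (hx0 : ∀ i S, 0 ≤ x i S)
    (c p : ℝ)
    (k : ℕ) (hkc : (k : ℝ) = 1 / c)
    (hp1 : p ≤ 1)
    (OPT : ℝ) (hOPT : OPT ≤ ∑ i, ∑ S : Finset ι, x i S * v i S) :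
    (1 - p) * c * OPT ≤ (1 - p) * ∑ i, ∑ S : Finset ι, x i S * proxy (v i) c S := by
  have hc : c = 1 / k := by rw [hkc, one_div_one_div]
  have hp : 0 ≤ 1 - p := sub_nonneg.2 hp1
  calc (1 - p) * c * OPT ≤ (1 - p) * (c * ∑ i, ∑ S : Finset ι, x i S * v i S) := by
        rw [mul_assoc]
        gcongr
        exact hc ▸ by positivity
    _ = (1 - p) * ∑ i, ∑ S : Finset ι, x i S * (c * v i S) := by
        simp_rw [mul_sum, mul_left_comm c]
    _ ≤ (1 - p) * ∑ i, ∑ S : Finset ι, x i S * proxy (v i) c S := by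
        gcongr with i _ S _
        · exact hx0 i S
        · exact hc ▸ inv_natCast_mul_le_proxy (hnorm i) (hsub i) S

/-- The expected welfare of a `(c,p)`-fractional distribution arising from an
optimal feasible LP solution `x` is at least `(1-p)·c·OPT`.  (By linearity, the
expected welfare equals `(1-p) · Σ_i Σ_S x i S · proxy (v i) c S`.) -/
theorem cp_fractional_welfare {ι : Type*} [Fintype ι] [DecidableEq ι] (n : ℕ)
    (v : Fin n → Finset ι → ℝ)
    (hnorm : ∀ i, v i ∅ = 0)
    (hmono : ∀ i, ∀ ⦃A B : Finset ι⦄, A ⊆ B → v i A ≤ v i B)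
    (hsub : ∀ i, ∀ A B : Finset ι, v i (A ∪ B) ≤ v i A + v i B)
    (x : Fin n → Finset ι → ℝ)
    (hx0 : ∀ i S, 0 ≤ x i S)
    (hitem : ∀ j : ι,
      ∑ i, ∑ S ∈ Finset.univ.filter (fun S : Finset ι => j ∈ S), x i S ≤ 1)
    (hbidder : ∀ i, ∑ S : Finset ι, x i S ≤ 1)
    (c p : ℝ) (hc0 : 0 < c) (hc1 : c ≤ 1)
    (k : ℕ) (hk : 0 < k) (hkc : (k : ℝ) = 1 / c)
    (hp0 : 0 ≤ p) (hp1 : p ≤ 1)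
    (OPT : ℝ) (hOPT : OPT ≤ ∑ i, ∑ S : Finset ι, x i S * v i S) :
    (1 - p) * c * OPT ≤ (1 - p) * ∑ i, ∑ S : Finset ι, x i S * proxy (v i) c S :=
  cp_fractional_welfare_general n v hnorm hsub x hx0 c p k hkc hp1 OPT hOPT
end

section
/- If v : Finset M → ℝ is subadditive, then for any c ∈ [0,1], the c-proxy valuation v'(S) = Σ_{T ⊆ S} c^{|T|}(1−c)^{|S|−|T|} v(T) is also subadditive on disjoint sets: for disjoint A, B ⊆ M, v'(A ∪ B) ≤ v'(A) + v'(B). -/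
open Finset

/-!
`sampleWeight c S T` is the probability that a `c`-sample of `S` equals `T`, so `proxy v c S` is the
expectation of `v` on a `c`-sample of `S`. For disjoint `A` and `B`, a `c`-sample of `A ∪ B` is the
union of independent `c`-samples `T_A` of `A` and `T_B` of `B`; hence
`proxy v c (A ∪ B) = 𝔼 v (T_A ∪ T_B) ≤ 𝔼 v T_A + 𝔼 v T_B = proxy v c A + proxy v c B`.
-/

theorem Finset.sum_powerset_union_of_disjoint {α β : Type*} [DecidableEq α] [AddCommMonoid β]
    {A B : Finset α} (hAB : Disjoint A B) (f : Finset α → β) :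
    ∑ T ∈ (A ∪ B).powerset, f T = ∑ TA ∈ A.powerset, ∑ TB ∈ B.powerset, f (TA ∪ TB) := by
  rw [powerset_union, ← image_sup_product, sum_image, sum_product]
  · rfl
  have restrict : ∀ {TA TB : Finset α}, TA ⊆ A → TB ⊆ B →
      (TA ∪ TB) ∩ A = TA ∧ (TA ∪ TB) ∩ B = TB :=
    fun hA hB => ⟨by simp [union_inter_distrib_right, inter_eq_left.2 hA,
        disjoint_iff_inter_eq_empty.1 (hAB.symm.mono_left hB)],
      by simp [union_inter_distrib_right, inter_eq_left.2 hB,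
        disjoint_iff_inter_eq_empty.1 (hAB.mono_left hA)]⟩
  rintro ⟨TA, TB⟩ hT ⟨TA', TB'⟩ hT' heq
  simp only [coe_product, Set.mem_prod, mem_coe, mem_powerset] at hT hT'
  change TA ∪ TB = TA' ∪ TB' at heq
  have h := heq ▸ restrict hT.1 hT.2
  have h' := restrict hT'.1 hT'.2
  exact Prod.ext (h.1.symm.trans h'.1) (h.2.symm.trans h'.2)

section SampleWeight

variable {α R : Type*} [CommRing R]

def sampleWeight (c : R) (S T : Finset α) : R :=
  c ^ T.card * (1 - c) ^ (S.card - T.card)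

theorem sum_sampleWeight_powerset (c : R) (S : Finset α) :
    ∑ T ∈ S.powerset, sampleWeight c S T = 1 := by
  unfold sampleWeight
  have binomial : (1 : R) = (c + (1 - c)) ^ S.card := by rw [add_sub_cancel, one_pow]
  rw [sum_powerset_apply_card (fun k => c ^ k * (1 - c) ^ (S.card - k))]
  conv_rhs => rw [binomial, add_pow]
  exact sum_congr rfl fun k _ => by rw [nsmul_eq_mul]; ring

theorem sampleWeight_nonneg [PartialOrder R] [IsOrderedRing R] {c : R} (hc0 : 0 ≤ c)
    (hc1 : c ≤ 1) (S T : Finset α) : 0 ≤ sampleWeight c S T := by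
  have : 0 ≤ 1 - c := sub_nonneg.2 hc1
  unfold sampleWeight
  positivity

theorem sampleWeight_union [DecidableEq α] (c : R) {A B TA TB : Finset α} (hAB : Disjoint A B)
    (hA : TA ⊆ A) (hB : TB ⊆ B) :
    sampleWeight c (A ∪ B) (TA ∪ TB) = sampleWeight c A TA * sampleWeight c B TB := by
  have hT : Disjoint TA TB := hAB.mono hA hB
  have hcard : (A ∪ B).card - (TA ∪ TB).card = (A.card - TA.card) + (B.card - TB.card) := by
    rw [card_union_of_disjoint hAB, card_union_of_disjoint hT]
    have := card_le_card hA
    have := card_le_card hB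
    omega
  rw [sampleWeight, hcard, card_union_of_disjoint hT, sampleWeight, sampleWeight]
  ring

theorem sum_sampleWeight_mul_add (c : R) (A B : Finset α) (f g : Finset α → R) :
    ∑ TA ∈ A.powerset, ∑ TB ∈ B.powerset,
        sampleWeight c A TA * sampleWeight c B TB * (f TA + g TB) =
      ∑ TA ∈ A.powerset, sampleWeight c A TA * f TA +
        ∑ TB ∈ B.powerset, sampleWeight c B TB * g TB := by
  simp only [mul_add, sum_add_distrib]
  congr 1
  · simp_rw [mul_right_comm _ (sampleWeight c B _), ← sum_mul_sum, sum_sampleWeight_powerset,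
      mul_one]
  · simp_rw [mul_assoc, ← sum_mul_sum, sum_sampleWeight_powerset, one_mul]

end SampleWeight

theorem proxy_eq_sum_sampleWeight {α : Type*} (v : Finset α → ℝ) (c : ℝ) (S : Finset α) :
    proxy v c S = ∑ T ∈ S.powerset, sampleWeight c S T * v T := rfl

theorem proxy_union_of_disjoint {α : Type*} [DecidableEq α] (v : Finset α → ℝ) (c : ℝ)
    {A B : Finset α} (hAB : Disjoint A B) :
    proxy v c (A ∪ B) = ∑ TA ∈ A.powerset, ∑ TB ∈ B.powerset,
      sampleWeight c A TA * sampleWeight c B TB * v (TA ∪ TB) := by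
  rw [proxy_eq_sum_sampleWeight, sum_powerset_union_of_disjoint hAB]
  refine sum_congr rfl fun TA hTA => sum_congr rfl fun TB hTB => ?_
  rw [sampleWeight_union c hAB (mem_powerset.1 hTA) (mem_powerset.1 hTB)]

theorem proxy_subadditive_on_disjoint {α : Type*} [DecidableEq α]
    (v : Finset α → ℝ)
    (hsub : ∀ S T : Finset α, v (S ∪ T) ≤ v S + v T)
    (c : ℝ) (hc0 : 0 ≤ c) (hc1 : c ≤ 1) :
    ∀ A B : Finset α, Disjoint A B →
      proxy v c (A ∪ B) ≤ proxy v c A + proxy v c B := by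
  intro A B hAB
  calc proxy v c (A ∪ B)
      = ∑ TA ∈ A.powerset, ∑ TB ∈ B.powerset,
          sampleWeight c A TA * sampleWeight c B TB * v (TA ∪ TB) :=
        proxy_union_of_disjoint v c hAB
    _ ≤ ∑ TA ∈ A.powerset, ∑ TB ∈ B.powerset,
          sampleWeight c A TA * sampleWeight c B TB * (v TA + v TB) :=
        sum_le_sum fun TA _ => sum_le_sum fun TB _ =>
          mul_le_mul_of_nonneg_left (hsub TA TB)
            (mul_nonneg (sampleWeight_nonneg hc0 hc1 A TA) (sampleWeight_nonneg hc0 hc1 B TB))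
    _ = proxy v c A + proxy v c B := sum_sampleWeight_mul_add c A B v v
end
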